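/- For the standard free involution τ on S¹ × S³ given by (t, v) ↦ (-t, v), whose orbit space is S¹ × S³, the ℤ₂-index of (S¹ × S³, τ) equals 1. -/

import Mathlib

/-!
STATEMENT 13: For the standard free involution `τ` on `S¹ × S³` given by
`(t, v) ↦ (-t, v)` (orbit space `S¹ × S³`), the ℤ₂-index of `(S¹ × S³, τ)` equals 1.

The ℤ₂-index is the minimal `n` for which there is a continuous map
`f : S¹ × S³ → Sⁿ` with `f(τ x) = -f(x)`, where `Sⁿ` is the unit sphere of `ℝ^{n+1}`.
-/

noncomputable section

/-- The circle `S¹ ⊆ ℂ`. -/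
abbrev S1 : Type := Metric.sphere (0 : ℂ) 1

/-- The 3-sphere `S³ ⊆ ℝ⁴`. -/
abbrev S3 : Type := Metric.sphere (0 : EuclideanSpace ℝ (Fin 4)) 1

/-- The involution `(t, v) ↦ (-t, v)` on `S¹ × S³`. -/
def tau13 (x : S1 × S3) : S1 × S3 := (⟨-x.1.1, by simp⟩, x.2)

/-- The ℤ₂-index of a free involution `τ` on a space `X`: the least `n` admitting a
continuous map `X → Sⁿ` which is equivariant for `τ` and the antipodal involution. -/
def indZ2 (X : Type) [TopologicalSpace X] (τ : X → X) : ℕ :=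
  sInf {n : ℕ | ∃ f : X → Metric.sphere (0 : EuclideanSpace ℝ (Fin (n + 1))) 1,
    Continuous f ∧ ∀ x, ((f (τ x) : EuclideanSpace ℝ (Fin (n + 1))) = -(f x))}

/-!
The projection `(t, v) ↦ t` followed by `ℂ ≅ ℝ²` is an equivariant map to `S¹`, so the index is
at most 1. It is not 0: an equivariant map `f` to `S⁰ = {±1}` would take both signs on the
connected space `S¹ × S³`, since `f (τ x) = -f x`.
-/

open Metric

section EquivariantSphereMaps

variable {X : Type} [TopologicalSpace X] {τ : X → X}

theorem indZ2_le_of_continuous_odd {n : ℕ} {f : X → sphere (0 : EuclideanSpace ℝ (Fin (n + 1))) 1}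
    (hf : Continuous f) (hodd : ∀ x, (f (τ x) : EuclideanSpace ℝ (Fin (n + 1))) = -(f x)) :
    indZ2 X τ ≤ n :=
  Nat.sInf_le ⟨f, hf, hodd⟩

theorem not_continuous_odd_sphere_zero [PreconnectedSpace X] [Nonempty X]
    {f : X → sphere (0 : EuclideanSpace ℝ (Fin 1)) 1} (hf : Continuous f) :
    ¬ ∀ x, (f (τ x) : EuclideanSpace ℝ (Fin 1)) = -(f x) := by
  intro hodd
  let g : X → ℝ := fun x => (f x : EuclideanSpace ℝ (Fin 1)) 0
  have hg : Continuous g :=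
    (continuous_apply 0).comp ((PiLp.continuous_ofLp 2 _).comp (continuous_subtype_val.comp hf))
  have hg_odd : ∀ x, g (τ x) = -g x := fun x => by simp only [g, hodd x]; rfl
  obtain ⟨x₀⟩ := ‹Nonempty X›
  have hsign : ∃ a, g a ≤ 0 := by
    rcases le_total (g x₀) 0 with h | h
    · exact ⟨x₀, h⟩
    · exact ⟨τ x₀, by linarith [hg_odd x₀]⟩
  have hsign' : ∃ b, 0 ≤ g b := by
    rcases le_total 0 (g x₀) with h | h
    · exact ⟨x₀, h⟩
    · exact ⟨τ x₀, by linarith [hg_odd x₀]⟩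
  obtain ⟨x, hx⟩ := mem_range_of_exists_le_of_exists_ge hg hsign hsign'
  have hfx : (f x : EuclideanSpace ℝ (Fin 1)) = 0 := by
    ext i
    rw [Subsingleton.elim i 0]
    exact hx
  simpa [hfx] using norm_eq_of_mem_sphere (f x)

theorem indZ2_eq_one_of_continuous_odd [PreconnectedSpace X] [Nonempty X]
    {f : X → sphere (0 : EuclideanSpace ℝ (Fin 2)) 1}
    (hf : Continuous f) (hodd : ∀ x, (f (τ x) : EuclideanSpace ℝ (Fin 2)) = -(f x)) :
    indZ2 X τ = 1 := by
  refine le_antisymm (indZ2_le_of_continuous_odd hf hodd) (Nat.one_le_iff_ne_zero.mpr ?_)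
  intro h
  rcases Nat.sInf_eq_zero.mp h with ⟨g, hg, hg_odd⟩ | hempty
  · exact not_continuous_odd_sphere_zero hg hg_odd
  · exact hempty.subset ⟨f, hf, hodd⟩

end EquivariantSphereMaps

theorem connectedSpace_sphere {E : Type} [NormedAddCommGroup E] [NormedSpace ℝ E]
    (hE : 1 < Module.rank ℝ E) {r : ℝ} (hr : 0 ≤ r) : ConnectedSpace (sphere (0 : E) r) :=
  Subtype.connectedSpace (isConnected_sphere hE 0 hr)

instance : ConnectedSpace S1 :=
  connectedSpace_sphere (by rw [Complex.rank_real_complex]; norm_num) zero_le_one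

instance : ConnectedSpace S3 :=
  connectedSpace_sphere (by rw [← Module.finrank_eq_rank, finrank_euclideanSpace_fin]; norm_num) zero_le_one

def circleProj (x : S1 × S3) : sphere (0 : EuclideanSpace ℝ (Fin 2)) 1 :=
  ⟨Complex.orthonormalBasisOneI.repr x.1, by simp⟩

theorem continuous_circleProj : Continuous circleProj :=
  (Complex.orthonormalBasisOneI.repr.continuous.comp
    (continuous_subtype_val.comp continuous_fst)).subtype_mk _

theorem circleProj_tau13 (x : S1 × S3) :
    (circleProj (tau13 x) : EuclideanSpace ℝ (Fin 2)) = -(circleProj x) := by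
  simp [circleProj, tau13]

/-- `ind_{ℤ₂}(S¹ × S³, (t,v) ↦ (-t,v)) = 1`. -/
theorem stmt_13 : indZ2 (S1 × S3) tau13 = 1 :=
  indZ2_eq_one_of_continuous_odd continuous_circleProj circleProj_tau13
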